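/- arXiv:2212.02223 — 6 statements merged into one kernel-verified Lean document; each statement's English description precedes it below -/
import Mathlib

section
/- Let Y₁ and Y₂ be n-dimensional Banach spaces and T : Y₁ → Y₂ a linear isomorphism with ‖T‖ = 1 and ‖T⁻¹‖ = ρ. Define φ(y) := t(y)·T(y) with t(y) := ‖y‖_{Y₁}/‖Ty‖_{Y₂} for y ≠ 0 (and φ(0) = 0). Then φ maps the closed unit ball of Y₁ onto the closed unit ball of Y₂ and is (2ρ+1)-Lipschitz, i.e., ‖φ(y) − φ(z)‖_{Y₂} ≤ (2ρ+1)‖y − z‖_{Y₁} for all y, z in the closed unit ball of Y₁. -/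
/-!
Rescaling `T y` to the length of `y` gives a norm-preserving map `φ`, so `φ` maps the unit ball
into itself, and it is onto because it is positively homogeneous and sends a preimage `T⁻¹ z`
to a positive multiple of `z`. For the Lipschitz bound write, with `a = ‖y‖/‖Ty‖` and
`b = ‖z‖/‖Tz‖ ≤ ρ`,
`φ y - φ z = (a - b) • T y + b • (T y - T z)`;
here `|a - b| ‖Ty‖ = |‖y‖ - b ‖Ty‖| ≤ |‖y‖ - ‖z‖| + b |‖Tz‖ - ‖Ty‖| ≤ (1 + ρ) ‖y - z‖` and
`b ‖Ty - Tz‖ ≤ ρ ‖y - z‖`.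
-/

section NormRescale

variable {E F : Type*} [SeminormedAddCommGroup E] [SeminormedAddCommGroup F] {f : E → F} {ρ : ℝ}

theorem div_norm_mul_norm_of_le_mul {y : E} (h : ‖y‖ ≤ ρ * ‖f y‖) :
    ‖y‖ / ‖f y‖ * ‖f y‖ = ‖y‖ := by
  rcases (norm_nonneg (f y)).eq_or_lt with hfy | hfy
  · rw [← hfy, mul_zero] at h ⊢
    exact (le_antisymm h (norm_nonneg y)).symm
  · exact div_mul_cancel₀ _ hfy.ne'

variable [NormedSpace ℝ F]

/-- Where `f y = 0`, the junk value `‖y‖ / 0 = 0` makes this `0`. -/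
noncomputable def normRescale (f : E → F) (y : E) : F := (‖y‖ / ‖f y‖) • f y

theorem norm_normRescale {y : E} (h : ‖y‖ ≤ ρ * ‖f y‖) : ‖normRescale f y‖ = ‖y‖ := by
  rw [normRescale, norm_smul, Real.norm_of_nonneg (by positivity),
    div_norm_mul_norm_of_le_mul h]

theorem norm_normRescale_sub_le (hf : ∀ y z, ‖f y - f z‖ ≤ ‖y - z‖) (hρ : 0 ≤ ρ)
    (h : ∀ y, ‖y‖ ≤ ρ * ‖f y‖) (y z : E) :
    ‖normRescale f y - normRescale f z‖ ≤ (2 * ρ + 1) * ‖y - z‖ := by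
  set a := ‖y‖ / ‖f y‖
  set b := ‖z‖ / ‖f z‖
  have hb₀ : 0 ≤ b := by positivity
  have hbρ : b ≤ ρ := div_le_of_le_mul₀ (norm_nonneg _) hρ (h z)
  have hfyz : b * ‖f y - f z‖ ≤ ρ * ‖y - z‖ :=
    mul_le_mul hbρ (hf y z) (norm_nonneg _) hρ
  have hradial : |a - b| * ‖f y‖ ≤ (ρ + 1) * ‖y - z‖ := by
    calc |a - b| * ‖f y‖ = |(‖y‖ - ‖z‖) + b * (‖f z‖ - ‖f y‖)| := by
          rw [← abs_norm (f y), ← abs_mul, abs_norm, sub_mul,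
            div_norm_mul_norm_of_le_mul (h y), mul_sub, div_norm_mul_norm_of_le_mul (h z)]
          ring_nf
      _ ≤ |‖y‖ - ‖z‖| + b * |‖f z‖ - ‖f y‖| := by
          rw [← abs_of_nonneg hb₀, ← abs_mul, abs_of_nonneg hb₀]
          exact abs_add_le _ _
      _ ≤ ‖y - z‖ + b * ‖f y - f z‖ := by
          gcongr
          · exact abs_norm_sub_norm_le y z
          · rw [abs_sub_comm]
            exact abs_norm_sub_norm_le _ _
      _ ≤ (ρ + 1) * ‖y - z‖ := by linarith
  calc ‖normRescale f y - normRescale f z‖ = ‖(a - b) • f y + b • (f y - f z)‖ := by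
        rw [normRescale, normRescale]
        congr 1
        module
    _ ≤ |a - b| * ‖f y‖ + b * ‖f y - f z‖ := by
        refine (norm_add_le _ _).trans_eq ?_
        rw [norm_smul, norm_smul, Real.norm_eq_abs, Real.norm_of_nonneg hb₀]
    _ ≤ (2 * ρ + 1) * ‖y - z‖ := by linarith

end NormRescale

section Linear

variable {E F G : Type*} [NormedAddCommGroup E] [NormedSpace ℝ E] [NormedAddCommGroup F]
  [NormedSpace ℝ F] [FunLike G E F] [LinearMapClass G ℝ E F]

theorem normRescale_smul_of_nonneg (T : G) {c : ℝ} (hc : 0 ≤ c) (y : E) :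
    normRescale T (c • y) = c • normRescale T y := by
  rcases hc.eq_or_lt with rfl | hc
  · simp [normRescale]
  · rw [normRescale, normRescale, map_smul, norm_smul, norm_smul, Real.norm_of_nonneg hc.le,
      mul_div_mul_left _ _ hc.ne', smul_comm]

theorem exists_normRescale_eq {T : G} (hT : Function.Surjective T) (z : F) :
    ∃ y, normRescale T y = z := by
  rcases eq_or_ne z 0 with rfl | hz
  · exact ⟨0, by simp [normRescale]⟩
  obtain ⟨x, rfl⟩ := hT z
  have hx : x ≠ 0 := by rintro rfl; exact hz (map_zero T)
  refine ⟨(‖T x‖ / ‖x‖) • x, ?_⟩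
  rw [normRescale_smul_of_nonneg T (by positivity), normRescale, smul_smul,
    div_mul_div_cancel₀ (norm_ne_zero_iff.mpr hx), div_self (norm_ne_zero_iff.mpr hz), one_smul]

end Linear

open Classical in

theorem lipschitz_ball_map_general {Y₁ Y₂ : Type*} [NormedAddCommGroup Y₁] [NormedSpace ℝ Y₁]
    [NormedAddCommGroup Y₂] [NormedSpace ℝ Y₂]
    (T : Y₁ →L[ℝ] Y₂) (S : Y₂ →L[ℝ] Y₁) (hST : ∀ y, S (T y) = y) (hTS : ∀ z, T (S z) = z)
    (ρ : ℝ) (hT : ‖T‖ = 1) (hS : ‖S‖ = ρ) :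
    ∀ φ : Y₁ → Y₂, (φ = fun y => if y = 0 then 0 else (‖y‖ / ‖T y‖) • T y) →
      ((∀ y, ‖y‖ ≤ 1 → ‖φ y‖ ≤ 1) ∧
       (∀ z, ‖z‖ ≤ 1 → ∃ y, ‖y‖ ≤ 1 ∧ φ y = z) ∧
       (∀ y z, ‖y‖ ≤ 1 → ‖z‖ ≤ 1 → ‖φ y - φ z‖ ≤ (2 * ρ + 1) * ‖y - z‖)) := by
  rintro φ rfl
  have hφ : (fun y => if y = 0 then 0 else (‖y‖ / ‖T y‖) • T y) = normRescale T := by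
    funext y
    split_ifs with hy
    · simp [hy, normRescale]
    · rfl
  rw [hφ]
  have hT₁ : ∀ y z, ‖T y - T z‖ ≤ ‖y - z‖ := fun y z => by
    simpa [← map_sub, hT] using T.le_opNorm (y - z)
  have hS₁ : ∀ y, ‖y‖ ≤ ρ * ‖T y‖ := fun y => by
    simpa [hST, hS] using S.le_opNorm (T y)
  refine ⟨fun y hy => (norm_normRescale (hS₁ y)).trans_le hy, fun z hz => ?_,
    fun y z _ _ => norm_normRescale_sub_le hT₁ (hS ▸ norm_nonneg S) hS₁ y z⟩
  obtain ⟨y, rfl⟩ := exists_normRescale_eq (fun z => ⟨S z, hTS z⟩ : Function.Surjective T) z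
  exact ⟨y, (norm_normRescale (hS₁ y)).symm.trans_le hz, rfl⟩

open Classical in
/-- if `T : Y₁ → Y₂` is a linear isomorphism with `‖T‖ = 1` and `‖T⁻¹‖ = ρ`,
then `φ(y) = (‖y‖/‖Ty‖) • Ty` maps the closed unit ball of `Y₁` onto that of `Y₂`
and is `(2ρ+1)`-Lipschitz on the closed unit ball. -/
theorem lipschitz_ball_map {Y₁ Y₂ : Type*} [NormedAddCommGroup Y₁] [NormedSpace ℝ Y₁]
    [NormedAddCommGroup Y₂] [NormedSpace ℝ Y₂]
    [FiniteDimensional ℝ Y₁] [FiniteDimensional ℝ Y₂] (n : ℕ) (hn : 1 ≤ n)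
    (hd₁ : Module.finrank ℝ Y₁ = n) (hd₂ : Module.finrank ℝ Y₂ = n)
    (T : Y₁ →L[ℝ] Y₂) (S : Y₂ →L[ℝ] Y₁) (hST : ∀ y, S (T y) = y) (hTS : ∀ z, T (S z) = z)
    (ρ : ℝ) (hT : ‖T‖ = 1) (hS : ‖S‖ = ρ) :
    ∀ φ : Y₁ → Y₂, (φ = fun y => if y = 0 then 0 else (‖y‖ / ‖T y‖) • T y) →
      ((∀ y, ‖y‖ ≤ 1 → ‖φ y‖ ≤ 1) ∧
       (∀ z, ‖z‖ ≤ 1 → ∃ y, ‖y‖ ≤ 1 ∧ φ y = z) ∧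
       (∀ y z, ‖y‖ ≤ 1 → ‖z‖ ≤ 1 → ‖φ y - φ z‖ ≤ (2 * ρ + 1) * ‖y - z‖)) :=
  lipschitz_ball_map_general T S hST hTS ρ hT hS
end

section
/- Fix W ≥ 1, d ≥ 1, and w ≥ 1. Consider the shallow ReLU network map Ψ(y) = A¹(ReLU̅(A⁰(x))) on [0,1]^d, where A⁰ : ℝ^d → ℝ^W and A¹ : ℝ^W → ℝ are affine with entries given by the parameter vector y, and ReLU̅ applies t ↦ max(t,0) coordinatewise. Then for all parameter vectors y, y' with ‖y‖_∞ ≤ w and ‖y'‖_∞ ≤ w, sup_{x∈[0,1]^d}|Ψ(y)(x) − Ψ(y')(x)| ≤ 3(d+2)·W·w²·‖y − y'‖_∞. -/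
/-- Parameters of a shallow network of width `W` on `ℝ^d`: the matrix of `A⁰`, the bias
of `A⁰`, the (row) matrix of `A¹` and the bias of `A¹`.  With the product/pi norms this
carries exactly the ℓ∞ norm of the full parameter vector. -/
abbrev SNNParams (W d : ℕ) := (Fin W → Fin d → ℝ) × (Fin W → ℝ) × (Fin W → ℝ) × ℝ

/-- The output of the shallow ReLU network with parameters `y` at the point `x`. -/
noncomputable def shallowReluNet {W d : ℕ} (y : SNNParams W d) (x : Fin d → ℝ) : ℝ :=
  ∑ i, y.2.2.1 i * max (∑ j, y.1 i j * x j + y.2.1 i) 0 + y.2.2.2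

lemma snn_bounds {W d : ℕ} (z : SNNParams W d) (c : ℝ) (h : ‖z‖ ≤ c) :
    (∀ i j, |z.1 i j| ≤ c) ∧ (∀ i, |z.2.1 i| ≤ c) ∧ (∀ i, |z.2.2.1 i| ≤ c)
      ∧ |z.2.2.2| ≤ c := by
  have h1 : ‖z.1‖ ≤ c := le_trans (norm_fst_le z) h
  have h2 : ‖z.2‖ ≤ c := le_trans (norm_snd_le z) h
  have h21 : ‖z.2.1‖ ≤ c := le_trans (norm_fst_le z.2) h2
  have h22 : ‖z.2.2‖ ≤ c := le_trans (norm_snd_le z.2) h2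
  have h221 : ‖z.2.2.1‖ ≤ c := le_trans (norm_fst_le z.2.2) h22
  have h222 : ‖z.2.2.2‖ ≤ c := le_trans (norm_snd_le z.2.2) h22
  refine ⟨fun i j => ?_, fun i => ?_, fun i => ?_, h222⟩
  · exact le_trans (le_trans (norm_le_pi_norm (z.1 i) j) (norm_le_pi_norm z.1 i)) h1
  · exact le_trans (norm_le_pi_norm z.2.1 i) h21
  · exact le_trans (norm_le_pi_norm z.2.2.1 i) h221

/-- a shallow ReLU network with parameters bounded by `w ≥ 1` is
`3(d+2)Ww²`-Lipschitz in its parameters, uniformly over `[0,1]^d`. -/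
theorem shallow_relu_param_lipschitz (W d : ℕ) (hW : 1 ≤ W) (hd : 1 ≤ d)
    (w : ℝ) (hw : 1 ≤ w)
    (y y' : SNNParams W d) (hy : ‖y‖ ≤ w) (hy' : ‖y'‖ ≤ w)
    (x : Fin d → ℝ) (hx : ∀ j, x j ∈ Set.Icc (0 : ℝ) 1) :
    |shallowReluNet y x - shallowReluNet y' x| ≤
      3 * (d + 2) * W * w ^ 2 * ‖y - y'‖ := by
  set ε := ‖y - y'‖ with hεdef
  have hε0 : (0:ℝ) ≤ ε := norm_nonneg _
  obtain ⟨hAw, hbw, hcw, hew⟩ := snn_bounds y w hy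
  obtain ⟨hAw', hbw', hcw', hew'⟩ := snn_bounds y' w hy'
  obtain ⟨hAε, hbε, hcε, heε⟩ := snn_bounds (y - y') ε le_rfl
  have hxabs : ∀ j, |x j| ≤ 1 := fun j => by
    obtain ⟨h0, h1⟩ := hx j; rw [abs_of_nonneg h0]; exact h1
  -- pre-activation difference bound
  have hz : ∀ i : Fin W,
      |(∑ j, y.1 i j * x j + y.2.1 i) - (∑ j, y'.1 i j * x j + y'.2.1 i)|
        ≤ (d + 1) * ε := by
    intro i
    have : (∑ j, y.1 i j * x j + y.2.1 i) - (∑ j, y'.1 i j * x j + y'.2.1 i)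
        = (∑ j, (y.1 i j - y'.1 i j) * x j) + (y.2.1 i - y'.2.1 i) := by
      simp only [sub_mul, Finset.sum_sub_distrib]; ring
    rw [this]
    calc |(∑ j, (y.1 i j - y'.1 i j) * x j) + (y.2.1 i - y'.2.1 i)|
        ≤ |∑ j, (y.1 i j - y'.1 i j) * x j| + |y.2.1 i - y'.2.1 i| := abs_add_le _ _
      _ ≤ (∑ j : Fin d, ε * 1) + ε := by
          gcongr
          · calc |∑ j, (y.1 i j - y'.1 i j) * x j|
                ≤ ∑ j, |(y.1 i j - y'.1 i j) * x j| := Finset.abs_sum_le_sum_abs _ _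
              _ ≤ ∑ j : Fin d, ε * 1 := by
                  apply Finset.sum_le_sum; intro j _
                  rw [abs_mul]
                  have h1 : |y.1 i j - y'.1 i j| ≤ ε := by
                    have := hAε i j; simpa using this
                  exact mul_le_mul h1 (hxabs j) (abs_nonneg _) hε0
          · have := hbε i; simpa using this
      _ = (d + 1) * ε := by simp [Finset.sum_const]; ring
  -- pre-activation size bound for y'
  have hz' : ∀ i : Fin W, |∑ j, y'.1 i j * x j + y'.2.1 i| ≤ (d + 1) * w := by
    intro i
    calc |∑ j, y'.1 i j * x j + y'.2.1 i|
        ≤ |∑ j, y'.1 i j * x j| + |y'.2.1 i| := abs_add_le _ _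
      _ ≤ (∑ j : Fin d, w * 1) + w := by
          gcongr
          · calc |∑ j, y'.1 i j * x j| ≤ ∑ j, |y'.1 i j * x j| :=
                Finset.abs_sum_le_sum_abs _ _
              _ ≤ ∑ j : Fin d, w * 1 := by
                  apply Finset.sum_le_sum; intro j _
                  rw [abs_mul]
                  exact mul_le_mul (hAw' i j) (hxabs j) (abs_nonneg _)
                    (le_trans zero_le_one hw)
          · exact hbw' i
      _ = (d + 1) * w := by simp [Finset.sum_const]; ring
  have hw0 : (0:ℝ) ≤ w := le_trans zero_le_one hw
  -- per-term bound
  have hterm : ∀ i : Fin W,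
      |y.2.2.1 i * max (∑ j, y.1 i j * x j + y.2.1 i) 0
        - y'.2.2.1 i * max (∑ j, y'.1 i j * x j + y'.2.1 i) 0|
      ≤ 2 * (d + 1) * w * ε := by
    intro i
    set a := ∑ j, y.1 i j * x j + y.2.1 i
    set b := ∑ j, y'.1 i j * x j + y'.2.1 i
    have key : y.2.2.1 i * max a 0 - y'.2.2.1 i * max b 0
        = y.2.2.1 i * (max a 0 - max b 0) + (y.2.2.1 i - y'.2.2.1 i) * max b 0 := by
      ring
    have hmax : |max a 0 - max b 0| ≤ |a - b| := abs_max_sub_max_le_abs a b 0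
    have hmaxb : |max b 0| ≤ |b| := by
      rw [abs_of_nonneg (le_max_right b 0)]
      exact max_le (le_abs_self b) (abs_nonneg b)
    have hcdiff : |y.2.2.1 i - y'.2.2.1 i| ≤ ε := by
      have := hcε i; simpa using this
    calc |y.2.2.1 i * max a 0 - y'.2.2.1 i * max b 0|
        ≤ |y.2.2.1 i| * |max a 0 - max b 0|
            + |y.2.2.1 i - y'.2.2.1 i| * |max b 0| := by
          rw [key]
          exact le_trans (abs_add_le _ _) (by rw [abs_mul, abs_mul])
      _ ≤ w * ((d + 1) * ε) + ε * ((d + 1) * w) := add_le_add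
          (mul_le_mul (hcw i) (le_trans hmax (hz i)) (abs_nonneg _) hw0)
          (mul_le_mul hcdiff (le_trans hmaxb (hz' i)) (abs_nonneg _) hε0)
      _ = 2 * (d + 1) * w * ε := by ring
  -- assemble
  have hsplit : shallowReluNet y x - shallowReluNet y' x
      = (∑ i : Fin W, (y.2.2.1 i * max (∑ j, y.1 i j * x j + y.2.1 i) 0
          - y'.2.2.1 i * max (∑ j, y'.1 i j * x j + y'.2.1 i) 0))
        + (y.2.2.2 - y'.2.2.2) := by
    simp [shallowReluNet, Finset.sum_sub_distrib]; ring
  have heabs : |y.2.2.2 - y'.2.2.2| ≤ ε := by simpa using heε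
  have hmain : |shallowReluNet y x - shallowReluNet y' x|
      ≤ W * (2 * (d + 1) * w * ε) + ε := by
    rw [hsplit]
    calc |(∑ i : Fin W, _) + (y.2.2.2 - y'.2.2.2)|
        ≤ |∑ i : Fin W, (y.2.2.1 i * max (∑ j, y.1 i j * x j + y.2.1 i) 0
            - y'.2.2.1 i * max (∑ j, y'.1 i j * x j + y'.2.1 i) 0)|
          + |y.2.2.2 - y'.2.2.2| := abs_add_le _ _
      _ ≤ (∑ i : Fin W, 2 * (d + 1) * w * ε) + ε := by
          gcongr
          exact le_trans (Finset.abs_sum_le_sum_abs _ _)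
            (Finset.sum_le_sum fun i _ => hterm i)
      _ = W * (2 * (d + 1) * w * ε) + ε := by simp [Finset.sum_const]
  refine le_trans hmain ?_
  have hW1 : (1:ℝ) ≤ W := by exact_mod_cast hW
  have hd1 : (1:ℝ) ≤ d := by exact_mod_cast hd
  have hWw : (1:ℝ) ≤ W * w := by nlinarith
  have hA : (0:ℝ) ≤ (d + 2) * W * w * (w - 1) :=
    mul_nonneg (mul_nonneg (mul_nonneg (by linarith) (by linarith)) hw0)
      (by linarith)
  have hcoef : (W:ℝ) * (2 * (d + 1) * w) + 1 ≤ 3 * (d + 2) * W * w ^ 2 := by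
    nlinarith [mul_le_mul_of_nonneg_left hWw (by linarith : (0:ℝ) ≤ (d:ℝ) + 4)]
  calc (W:ℝ) * (2 * (d + 1) * w * ε) + ε = ((W:ℝ) * (2 * (d + 1) * w) + 1) * ε := by ring
    _ ≤ 3 * (d + 2) * W * w ^ 2 * ε := mul_le_mul_of_nonneg_right hcoef hε0
end

section
/- Let K be a compact subset of a Banach space X with ε_n(K)_X ≥ c₁[log₂ n]^{−α} for all n ≥ 2 and some α > 0. Let φ : ℕ → ℝ satisfy φ(n) ≥ c·log₂ n for some c > 0 and set γ_n = 2^{φ(n)}. Then there is C > 0 with d_n^{γ_n}(K)_X ≥ C·[log₂(n·φ(n))]^{−α} for all sufficiently large n. -/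
/-- `N` is a norm on `ℝ^n`. -/
def IsNorm {n : ℕ} (N : (Fin n → ℝ) → ℝ) : Prop :=
  (∀ y, N y = 0 ↔ y = 0) ∧ (∀ (a : ℝ) (y), N (a • y) = |a| * N y) ∧
    (∀ y z, N (y + z) ≤ N y + N z)

variable {X : Type*} [NormedAddCommGroup X] [NormedSpace ℝ X] [CompleteSpace X]

/-- The fixed Lipschitz width `d^γ(K, Y_n)_X` for the norm `N` on `ℝ^n`. -/
noncomputable def fixedLipWidth {n : ℕ} (K : Set X) (N : (Fin n → ℝ) → ℝ) (γ : ℝ) : ℝ :=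
  ⨅ L : {L : (Fin n → ℝ) → X //
      ∀ y y', N y ≤ 1 → N y' ≤ 1 → ‖L y - L y'‖ ≤ γ * N (y - y')},
    ⨆ f : K, ⨅ y : {y : Fin n → ℝ // N y ≤ 1}, ‖(f : X) - L.1 y.1‖

/-- The Lipschitz width `d_n^γ(K)_X`. -/
noncomputable def lipWidth (K : Set X) (n : ℕ) (γ : ℝ) : ℝ :=
  ⨅ N : {N : (Fin n → ℝ) → ℝ // IsNorm N}, fixedLipWidth K N.1 γ

/-- The entropy number `ε_n(K)_X`. -/
noncomputable def entropyNum (K : Set X) (n : ℕ) : ℝ :=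
  sInf {ε : ℝ | 0 < ε ∧ ∃ g : Fin (2 ^ n) → X, K ⊆ ⋃ j, Metric.closedBall (g j) ε}

/-- The Chebyshev radius of `K`. -/
noncomputable def chebRad (K : Set X) : ℝ :=
  ⨅ g : X, ⨆ f : K, ‖g - (f : X)‖

/-! If `d_n^γ(K)_X < ε`, some `γ`-Lipschitz image of the unit ball of an `n`-dimensional norm
comes `ε`-close to every point of `K`. The image of a volumetric `ε/γ`-net of that ball, which has
at most `(3γ/ε)^n` points, is then a `2ε`-cover of `K` by `2^m` balls with `m = ⌈n log₂(3γ/ε)⌉`,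
so `ε_m(K)_X ≤ 2ε`. For `γ = 2^{φ(n)}` and `ε = C [log₂(n φ(n))]^{-α}` one has `m ≤ (n φ(n))²` for
large `n`, hence `ε_m(K)_X ≥ c₁ (log₂ m)^{-α} ≥ c₁ 2^{-α} [log₂(n φ(n))]^{-α}`, which contradicts
`ε_m(K)_X ≤ 2ε` as soon as `2C < c₁ 2^{-α}`. -/

open MeasureTheory Filter Pointwise Real

namespace IsNorm

variable {n : ℕ} {N : (Fin n → ℝ) → ℝ}

theorem map_zero (hN : IsNorm N) : N 0 = 0 := by
  simpa using hN.2.1 0 0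

theorem map_neg (hN : IsNorm N) (y : Fin n → ℝ) : N (-y) = N y := by
  simpa using hN.2.1 (-1) y

theorem map_sub_rev (hN : IsNorm N) (y z : Fin n → ℝ) : N (y - z) = N (z - y) := by
  rw [← neg_sub, hN.map_neg]

theorem map_sub_le (hN : IsNorm N) (x y z : Fin n → ℝ) : N (x - z) ≤ N (x - y) + N (y - z) := by
  simpa using hN.2.2 (x - y) (y - z)

theorem nonneg (hN : IsNorm N) (y : Fin n → ℝ) : 0 ≤ N y := by
  have h := hN.2.2 y (-y)
  rw [add_neg_cancel, hN.map_zero, hN.map_neg] at h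
  linarith

theorem exists_le_mul_norm (hN : IsNorm N) : ∃ b, ∀ y, N y ≤ b * ‖y‖ := by
  refine ⟨∑ i, N (Pi.single i 1), fun y => ?_⟩
  calc N y = N (∑ i, Pi.single i (y i)) := by rw [Finset.univ_sum_single]
    _ ≤ ∑ i, N (Pi.single i (y i)) :=
        Finset.le_sum_of_subadditive N hN.map_zero.le hN.2.2 _ _
    _ ≤ ∑ i, N (Pi.single i 1) * ‖y‖ := by
        gcongr with i
        rw [show Pi.single i (y i) = y i • Pi.single i 1 by simp [← Pi.single_smul], hN.2.1,
          ← Real.norm_eq_abs, mul_comm]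
        exact mul_le_mul_of_nonneg_left (norm_le_pi_norm y i) (hN.nonneg _)
    _ = (∑ i, N (Pi.single i 1)) * ‖y‖ := by rw [Finset.sum_mul]

theorem continuous (hN : IsNorm N) : Continuous N := by
  obtain ⟨b, hle⟩ := hN.exists_le_mul_norm
  refine (LipschitzWith.of_le_add_mul' b fun y z => ?_).continuous
  have := hN.map_sub_le y z 0
  simp only [sub_zero] at this
  rw [dist_eq_norm]
  linarith [hle (y - z)]

theorem exists_pos_mul_norm_le (hN : IsNorm N) : ∃ a > 0, ∀ y, a * ‖y‖ ≤ N y := by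
  rcases isEmpty_or_nonempty (Fin n) with hn | hn
  · exact ⟨1, one_pos, fun y => by simp [Subsingleton.elim y 0, hN.map_zero]⟩
  obtain ⟨x₀, hx₀, hmin⟩ := (isCompact_sphere (0 : Fin n → ℝ) 1).exists_isMinOn
    (NormedSpace.sphere_nonempty.mpr zero_le_one) hN.continuous.continuousOn
  have hx₀ : ‖x₀‖ = 1 := by simpa using hx₀
  have hpos : 0 < N x₀ := (hN.nonneg x₀).lt_of_ne fun h =>
    by simp [(hN.1 x₀).mp h.symm] at hx₀
  refine ⟨N x₀, hpos, fun y => ?_⟩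
  rcases eq_or_ne y 0 with rfl | hy
  · simp [hN.map_zero]
  have hy' : 0 < ‖y‖ := norm_pos_iff.mpr hy
  have hmem : ‖y‖⁻¹ • y ∈ Metric.sphere (0 : Fin n → ℝ) 1 := by
    simp [norm_smul, hy'.ne']
  have := hmin hmem
  rw [Set.mem_ofPred_eq, hN.2.1, abs_of_pos (inv_pos.mpr hy'), le_inv_mul_iff₀ hy'] at this
  linarith [mul_comm (N x₀) ‖y‖]

theorem setOf_sub_le_eq (hN : IsNorm N) (x : Fin n → ℝ) {r : ℝ} (hr : 0 < r) :
    {z | N (z - x) ≤ r} = x +ᵥ r • {z | N z ≤ 1} := by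
  ext z
  rw [Set.mem_vadd_set_iff_neg_vadd_mem, Set.mem_smul_set_iff_inv_smul_mem₀ hr.ne',
    Set.mem_ofPred_eq, Set.mem_ofPred_eq, hN.2.1, abs_of_pos (inv_pos.mpr hr),
    inv_mul_le_iff₀ hr, mul_one, vadd_eq_add, neg_add_eq_sub]

theorem volume_setOf_sub_le (hN : IsNorm N) (x : Fin n → ℝ) {r : ℝ} (hr : 0 < r) :
    volume {z | N (z - x) ≤ r} = ENNReal.ofReal (r ^ n) * volume {z | N z ≤ 1} := by
  rw [hN.setOf_sub_le_eq x hr, measure_vadd, Measure.addHaar_smul_of_nonneg _ hr.le,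
    Module.finrank_fin_fun]

theorem volume_unitBall_pos (hN : IsNorm N) : 0 < volume {z | N z ≤ 1} :=
  Measure.measure_pos_of_mem_nhds _ (x := 0) <| hN.continuous.continuousAt.preimage_mem_nhds <|
    Iic_mem_nhds (by simp [hN.map_zero])

theorem volume_unitBall_ne_top (hN : IsNorm N) : volume {z | N z ≤ 1} ≠ ⊤ := by
  obtain ⟨a, ha, hle⟩ := hN.exists_pos_mul_norm_le
  refine ne_top_of_le_ne_top (measure_closedBall_lt_top (x := 0) (r := a⁻¹)).ne
    (measure_mono fun z hz => ?_)
  rw [Metric.mem_closedBall, dist_zero_right, ← mul_one a⁻¹, le_inv_mul_iff₀ ha]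
  exact (hle z).trans hz

theorem card_le_of_separated (hN : IsNorm N) {δ : ℝ} (hδ : 0 < δ) {T : Finset (Fin n → ℝ)}
    (hT : ∀ x ∈ T, N x ≤ 1) (hsep : (T : Set (Fin n → ℝ)).Pairwise fun x x' => δ < N (x - x')) :
    (T.card : ℝ) ≤ (1 + 2 / δ) ^ n := by
  -- The `δ/2`-balls around the points of `T` are disjoint and lie in the `(1 + δ/2)`-ball.
  set v := volume {z : Fin n → ℝ | N z ≤ 1}
  have hdisj : (T : Set (Fin n → ℝ)).PairwiseDisjoint fun x => {z | N (z - x) ≤ δ / 2} :=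
    fun x hx x' hx' hne => Set.disjoint_left.mpr fun z hz hz' => by
      have := hN.map_sub_le x z x'
      rw [hN.map_sub_rev x z] at this
      linarith [hsep hx hx' hne, hz.out, hz'.out]
  have hsub : (⋃ x ∈ T, {z | N (z - x) ≤ δ / 2}) ⊆ {z | N (z - 0) ≤ 1 + δ / 2} := by
    simp only [Set.iUnion_subset_iff]
    intro x hx z hz
    have := hN.map_sub_le z x 0
    simp only [sub_zero, Set.mem_ofPred_eq] at this ⊢
    linarith [hz.out, hT x hx]
  have hvol : T.card * (ENNReal.ofReal ((δ / 2) ^ n) * v) ≤ ENNReal.ofReal ((1 + δ / 2) ^ n) * v :=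
    calc T.card * (ENNReal.ofReal ((δ / 2) ^ n) * v)
        = ∑ x ∈ T, volume {z | N (z - x) ≤ δ / 2} := by
          simp [hN.volume_setOf_sub_le _ (half_pos hδ), v]
      _ = volume (⋃ x ∈ T, {z | N (z - x) ≤ δ / 2}) :=
          (measure_biUnion_finset hdisj fun x _ => (isClosed_le (hN.continuous.comp
            (continuous_sub_right x)) continuous_const).measurableSet).symm
      _ ≤ ENNReal.ofReal ((1 + δ / 2) ^ n) * v := by
          rw [← hN.volume_setOf_sub_le 0 (by positivity)]
          exact measure_mono hsub
  rw [← mul_assoc, ENNReal.mul_le_mul_iff_left hN.volume_unitBall_pos.ne' hN.volume_unitBall_ne_top,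
    ← ENNReal.ofReal_natCast, ← ENNReal.ofReal_mul (by positivity),
    ENNReal.ofReal_le_ofReal_iff (by positivity), ← le_div_iff₀ (by positivity), ← div_pow] at hvol
  refine hvol.trans_eq (congrArg (· ^ n) ?_)
  field_simp
  ring

theorem exists_finset_net (hN : IsNorm N) {δ : ℝ} (hδ : 0 < δ) :
    ∃ T : Finset (Fin n → ℝ), (∀ x ∈ T, N x ≤ 1) ∧ (T.card : ℝ) ≤ (1 + 2 / δ) ^ n ∧
      ∀ y, N y ≤ 1 → ∃ x ∈ T, N (y - x) ≤ δ := by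
  classical
  let Separated (T : Finset (Fin n → ℝ)) : Prop :=
    (∀ x ∈ T, N x ≤ 1) ∧ (T : Set (Fin n → ℝ)).Pairwise fun x x' => δ < N (x - x')
  let sizes : Set ℕ := {k | ∃ T, Separated T ∧ T.card = k}
  have hbdd : BddAbove sizes :=
    ⟨⌊(1 + 2 / δ) ^ n⌋₊, by
      rintro _ ⟨T, hT, rfl⟩
      exact Nat.le_floor (hN.card_le_of_separated hδ hT.1 hT.2)⟩
  obtain ⟨T, ⟨hT, hTsep⟩, hTmax⟩ := Nat.sSup_mem (s := sizes) ⟨0, ∅, by simp [Separated]⟩ hbdd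
  refine ⟨T, hT, hN.card_le_of_separated hδ hT hTsep, fun y hy => ?_⟩
  -- A separated family of maximal size is a `δ`-net.
  by_contra! hfar
  have hyT : y ∉ T := fun hy' => by simpa [hN.map_zero, hδ.not_gt] using hfar y hy'
  have hins : Separated (insert y T) := by
    refine ⟨Finset.forall_mem_insert _ _ _ |>.mpr ⟨hy, hT⟩, ?_⟩
    rw [Finset.coe_insert]
    refine hTsep.insert fun x hx _ => ⟨hfar x hx, ?_⟩
    rw [hN.map_sub_rev]
    exact hfar x hx
  have := le_csSup hbdd ⟨_, hins, rfl⟩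
  rw [← hTmax, Finset.card_insert_of_notMem hyT] at this
  omega

end IsNorm

theorem pow_le_two_pow_natCeil_mul_logb {Q : ℝ} (hQ : 0 < Q) (n : ℕ) :
    Q ^ n ≤ (2 : ℝ) ^ ⌈n * logb 2 Q⌉₊ :=
  calc Q ^ n = (2 : ℝ) ^ (logb 2 Q * n) := by
        rw [rpow_mul_natCast zero_le_two, rpow_logb two_pos (by norm_num) hQ]
    _ ≤ (2 : ℝ) ^ (⌈n * logb 2 Q⌉₊ : ℝ) :=
        rpow_le_rpow_of_exponent_le one_le_two (mul_comm (n : ℝ) _ ▸ Nat.le_ceil _)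
    _ = (2 : ℝ) ^ ⌈n * logb 2 Q⌉₊ := rpow_natCast _ _

theorem logb_two_le_two_mul {x : ℝ} (hx : 0 ≤ x) : logb 2 x ≤ 2 * x := by
  have := log_two_gt_d9
  rw [logb, div_le_iff₀ (log_pos one_lt_two)]
  nlinarith [log_le_self hx]

theorem eventually_add_mul_logb_le_self (a b : ℝ) : ∀ᶠ x in atTop, a + b * logb 2 x ≤ x := by
  have h : (fun x => a + b * logb 2 x) =o[atTop] id :=
    (Asymptotics.isLittleO_const_id_atTop a).add (isLittleO_logb_id_atTop.const_mul_left b)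
  filter_upwards [h.def one_pos, eventually_ge_atTop 0] with x hx hx0
  simpa [abs_of_nonneg hx0] using (le_abs_self _).trans hx

theorem natCeil_mul_logb_le_sq {n t C α : ℝ} (hn : 1 ≤ n) (ht : 1 ≤ t) (hC : 0 < C)
    (hC1 : C ≤ 1) (hα : 0 ≤ α) (hP : 1 ≤ logb 2 (n * t))
    (hx : logb 2 3 - logb 2 C + 2 + 2 * α * logb 2 (n * t) ≤ n * t) :
    (⌈n * logb 2 (3 * 2 ^ t / (C * logb 2 (n * t) ^ (-α)))⌉₊ : ℝ) ≤ (n * t) ^ 2 := by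
  set P := logb 2 (n * t)
  set b := logb 2 3 - logb 2 C
  have hb : 0 ≤ b := by
    linarith [logb_nonneg one_lt_two (by norm_num : (1 : ℝ) ≤ 3), logb_nonpos one_lt_two hC.le hC1]
  have hlog : logb 2 (3 * 2 ^ t / (C * P ^ (-α))) = b + t + α * logb 2 P := by
    rw [logb_div (by positivity) (by positivity), logb_mul (by norm_num) (by positivity),
      logb_mul hC.ne' (by positivity), logb_rpow two_pos (by norm_num),
      logb_rpow_eq_mul_logb_of_pos (by positivity)]
    ring
  have hlogP : α * logb 2 P ≤ α * (2 * P) :=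
    mul_le_mul_of_nonneg_left (logb_two_le_two_mul (by positivity)) hα
  have hlogP0 : 0 ≤ α * logb 2 P := mul_nonneg hα (logb_nonneg one_lt_two hP)
  have hnb : n * b ≤ n * t * b := by nlinarith [mul_nonneg hb (by linarith : 0 ≤ t - 1)]
  have hnP : n * (α * logb 2 P) ≤ n * t * (2 * α * P) := by
    nlinarith [mul_nonneg (mul_nonneg (by linarith : 0 ≤ n) (by linarith : 0 ≤ t - 1))
      (by positivity : 0 ≤ 2 * α * P)]
  have hnt : 1 ≤ n * t := one_le_mul_of_one_le_of_one_le hn ht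
  rw [hlog]
  calc (⌈n * (b + t + α * logb 2 P)⌉₊ : ℝ) ≤ n * (b + t + α * logb 2 P) + 1 :=
        (Nat.ceil_lt_add_one (mul_nonneg (by linarith) (by linarith [hlogP0]))).le
    _ ≤ n * t * (b + 2 + 2 * α * P) := by linear_combination hnb + hnP + hnt
    _ ≤ (n * t) ^ 2 := by rw [sq]; gcongr

section Widths

variable {E : Type*} [NormedAddCommGroup E] {K : Set E} {n m : ℕ} {γ ε r : ℝ}

theorem entropyNum_le_of_subset_biUnion {s : Finset E} (hr : 0 < r) (hs : s.card ≤ 2 ^ m)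
    (hK : K ⊆ ⋃ x ∈ s, Metric.closedBall x r) : entropyNum K m ≤ r := by
  classical
  refine csInf_le ⟨0, fun _ h => h.1.le⟩ ⟨hr, fun j =>
    if h : (j : ℕ) < s.card then (s.equivFin.symm ⟨j, h⟩ : E) else 0, ?_⟩
  refine hK.trans (Set.iUnion₂_subset fun x hx => ?_)
  refine Set.subset_iUnion_of_subset (Fin.castLE hs (s.equivFin ⟨x, hx⟩)) ?_
  simp

theorem exists_norm_of_lipWidth_lt (h : lipWidth K n γ < ε) :
    ∃ N : (Fin n → ℝ) → ℝ, IsNorm N ∧ fixedLipWidth K N γ < ε := by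
  have : Nonempty {N : (Fin n → ℝ) → ℝ // IsNorm N} :=
    ⟨⟨(‖·‖), fun _ => norm_eq_zero, fun a y => by simp only [norm_smul, Real.norm_eq_abs],
      norm_add_le⟩⟩
  obtain ⟨⟨N, hN⟩, hlt⟩ := exists_lt_of_ciInf_lt h
  exact ⟨N, hN, hlt⟩

theorem exists_approx_of_fixedLipWidth_lt {N : (Fin n → ℝ) → ℝ} (hN : IsNorm N)
    (hK : Bornology.IsBounded K) (hγ : 0 ≤ γ) (h : fixedLipWidth K N γ < ε) :
    ∃ L : (Fin n → ℝ) → E, (∀ y y', N y ≤ 1 → N y' ≤ 1 → ‖L y - L y'‖ ≤ γ * N (y - y')) ∧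
      ∀ f ∈ K, ∃ y, N y ≤ 1 ∧ ‖f - L y‖ < ε := by
  have : Nonempty {L : (Fin n → ℝ) → E //
      ∀ y y', N y ≤ 1 → N y' ≤ 1 → ‖L y - L y'‖ ≤ γ * N (y - y')} :=
    ⟨⟨0, fun y y' _ _ => by simpa using mul_nonneg hγ (hN.nonneg _)⟩⟩
  obtain ⟨⟨L, hL⟩, hlt⟩ := exists_lt_of_ciInf_lt h
  let y₀ : {y : Fin n → ℝ // N y ≤ 1} := ⟨0, by simp [hN.map_zero]⟩
  have : Nonempty {y : Fin n → ℝ // N y ≤ 1} := ⟨y₀⟩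
  obtain ⟨R, hR⟩ := hK.exists_norm_le
  have hbdd : BddAbove (Set.range fun f : K => ⨅ y : {y // N y ≤ 1}, ‖(f : E) - L y‖) := by
    refine ⟨R + ‖L 0‖, ?_⟩
    rintro _ ⟨g, rfl⟩
    exact (ciInf_le ⟨0, by rintro _ ⟨_, rfl⟩; positivity⟩ y₀).trans
      ((norm_sub_le _ _).trans (by linarith [hR g g.2]))
  refine ⟨L, hL, fun f hf => ?_⟩
  obtain ⟨⟨y, hy⟩, hfy⟩ := exists_lt_of_ciInf_lt ((le_ciSup hbdd ⟨f, hf⟩).trans_lt hlt)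
  exact ⟨y, hy, hfy⟩

theorem entropyNum_le_of_lipWidth_lt (hK : Bornology.IsBounded K) (hε : 0 < ε) (hεγ : ε ≤ γ)
    (h : lipWidth K n γ < ε) (hm : (3 * γ / ε) ^ n ≤ (2 : ℝ) ^ m) : entropyNum K m ≤ 2 * ε := by
  classical
  have hγ : 0 < γ := hε.trans_le hεγ
  obtain ⟨N, hN, hNlt⟩ := exists_norm_of_lipWidth_lt h
  obtain ⟨L, hL, happrox⟩ := exists_approx_of_fixedLipWidth_lt hN hK hγ.le hNlt
  obtain ⟨T, hT, hTcard, hTnet⟩ := hN.exists_finset_net (div_pos hε hγ)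
  refine entropyNum_le_of_subset_biUnion (s := T.image L) (by positivity) ?_ ?_
  · have : 1 + 2 / (ε / γ) ≤ 3 * γ / ε :=
      calc 1 + 2 / (ε / γ) = 1 + 2 * (γ / ε) := by rw [div_div_eq_mul_div, mul_div_assoc]
        _ ≤ 3 * (γ / ε) := by linarith [(one_le_div hε).2 hεγ]
        _ = 3 * γ / ε := by rw [mul_div_assoc]
    have : (T.card : ℝ) ≤ 2 ^ m :=
      hTcard.trans ((pow_le_pow_left₀ (by positivity) this n).trans hm)
    exact Finset.card_image_le.trans (by exact_mod_cast this)
  · intro f hf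
    obtain ⟨y, hy, hfy⟩ := happrox f hf
    obtain ⟨x, hx, hyx⟩ := hTnet y hy
    refine Set.mem_biUnion (Finset.mem_coe.2 (Finset.mem_image_of_mem L hx)) ?_
    rw [Metric.mem_closedBall, dist_eq_norm]
    calc ‖f - L x‖ ≤ ‖f - L y‖ + ‖L y - L x‖ := norm_sub_le_norm_sub_add_norm_sub _ _ _
      _ ≤ ε + γ * (ε / γ) :=
          add_le_add hfy.le ((hL y x hy (hT x hx)).trans (mul_le_mul_of_nonneg_left hyx hγ.le))
      _ = 2 * ε := by field_simp; ring

theorem le_lipWidth_of_two_mul_lt_entropyNum (hK : Bornology.IsBounded K) (hε : 0 < ε)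
    (hεγ : ε ≤ γ) (h : 2 * ε < entropyNum K ⌈n * logb 2 (3 * γ / ε)⌉₊) : ε ≤ lipWidth K n γ :=
  le_of_not_gt fun hlt => h.not_ge <| entropyNum_le_of_lipWidth_lt hK hε hεγ hlt <|
    pow_le_two_pow_natCeil_mul_logb (div_pos (mul_pos three_pos (hε.trans_le hεγ)) hε) n

theorem le_lipWidth_of_le_entropyNum (hK : Bornology.IsBounded K) {α c₁ C t : ℝ}
    (hα : 0 ≤ α) (hC : 0 < C) (hC1 : C ≤ 1) (hCc₁ : 2 * C < c₁ * 2 ^ (-α)) (hn : 1 ≤ n)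
    (ht : 1 ≤ t) (hx : logb 2 3 - logb 2 C + 2 + 2 * α * logb 2 (n * t) ≤ n * t)
    (hε : ∀ m : ℕ, 2 ≤ m → c₁ * logb 2 m ^ (-α) ≤ entropyNum K m) :
    C * logb 2 (n * t) ^ (-α) ≤ lipWidth K n (2 ^ t) := by
  set P := logb 2 (n * t)
  have hn' : (1 : ℝ) ≤ n := by exact_mod_cast hn
  have hx1 : 1 ≤ (n : ℝ) * t := one_le_mul_of_one_le_of_one_le hn' ht
  have hx2 : 2 ≤ (n : ℝ) * t := by
    linarith [logb_nonneg one_lt_two (by norm_num : (1 : ℝ) ≤ 3), logb_nonpos one_lt_two hC.le hC1,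
      mul_nonneg hα (logb_nonneg one_lt_two hx1)]
  have hP : 1 ≤ P := by
    rw [le_logb_iff_rpow_le one_lt_two (by positivity), rpow_one]; exact hx2
  set ε := C * P ^ (-α)
  have hε0 : 0 < ε := by positivity
  have hε1 : ε ≤ 1 :=
    mul_le_one₀ hC1 (by positivity) (rpow_le_one_of_one_le_of_nonpos hP (by linarith))
  have h2t : 2 ≤ (2 : ℝ) ^ t := by simpa using rpow_le_rpow_of_exponent_le one_le_two ht
  refine le_lipWidth_of_two_mul_lt_entropyNum hK hε0 (by linarith) ?_
  set m := ⌈n * logb 2 (3 * 2 ^ t / ε)⌉₊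
  have hm2 : 2 ≤ m := by
    have : 2 ≤ logb 2 (3 * 2 ^ t / ε) := by
      rw [le_logb_iff_rpow_le one_lt_two (by positivity), le_div_iff₀ hε0]
      norm_num
      linarith
    exact_mod_cast (this.trans (le_mul_of_one_le_left (by linarith) hn')).trans (Nat.le_ceil _)
  have hlogm : logb 2 m ≤ 2 * P := by
    have hm : (m : ℝ) ≤ (n * t) ^ 2 := natCeil_mul_logb_le_sq hn' ht hC hC1 hα hP hx
    calc logb 2 m ≤ logb 2 ((n * t) ^ 2) := logb_le_logb_of_le one_lt_two (by positivity) hm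
      _ = 2 * P := by rw [logb_pow, Nat.cast_ofNat]
  have hm1 : 1 < (m : ℝ) := by exact_mod_cast hm2
  have hc₁ : 0 < c₁ :=
    (mul_pos_iff_of_pos_right (by positivity)).1 ((by positivity : 0 < 2 * C).trans hCc₁)
  calc 2 * ε = 2 * C * P ^ (-α) := by ring
    _ < c₁ * 2 ^ (-α) * P ^ (-α) := mul_lt_mul_of_pos_right hCc₁ (by positivity)
    _ = c₁ * (2 * P) ^ (-α) := by rw [mul_rpow zero_le_two (by positivity)]; ring
    _ ≤ c₁ * logb 2 m ^ (-α) := mul_le_mul_of_nonneg_left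
        (rpow_le_rpow_of_nonpos (logb_pos one_lt_two hm1) hlogm (by linarith)) hc₁.le
    _ ≤ entropyNum K m := hε m hm2

end Widths

/-- a lower bound `ε_n(K)_X ≥ c₁ [log₂ n]^{-α}` on the entropy numbers
yields `d_n^{γ_n}(K)_X ≥ C [log₂(n φ(n))]^{-α}` for `γ_n = 2^{φ(n)}`, `φ(n) ≥ c log₂ n`. -/
theorem lipWidth_lower_bound_log (K : Set X) (hK : IsCompact K)
    (α c c₁ : ℝ) (hα : 0 < α) (hc : 0 < c) (hc₁ : 0 < c₁)
    (φ : ℕ → ℝ) (hφ : ∀ n : ℕ, 1 ≤ n → c * Real.logb 2 n ≤ φ n)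
    (hε : ∀ n : ℕ, 2 ≤ n → c₁ * Real.logb 2 n ^ (-α) ≤ entropyNum K n) :
    ∃ C > (0 : ℝ), ∃ N : ℕ, ∀ n ≥ N,
      C * Real.logb 2 ((n : ℝ) * φ n) ^ (-α) ≤ lipWidth K n ((2 : ℝ) ^ φ n) := by
  obtain ⟨C, hC, hC1, hCc₁⟩ : ∃ C : ℝ, 0 < C ∧ C ≤ 1 ∧ 2 * C < c₁ * 2 ^ (-α) := by
    have : 0 < c₁ * (2 : ℝ) ^ (-α) := by positivity
    exact ⟨min 1 (c₁ * 2 ^ (-α) / 4), by positivity, min_le_left _ _,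
      by linarith [min_le_right 1 (c₁ * (2 : ℝ) ^ (-α) / 4)]⟩
  have hφ_top : Tendsto φ atTop atTop :=
    tendsto_atTop_mono' _ (eventually_atTop.2 ⟨1, hφ⟩)
      (((tendsto_logb_atTop one_lt_two).comp tendsto_natCast_atTop_atTop).const_mul_atTop hc)
  have hx_top : Tendsto (fun n : ℕ => n * φ n) atTop atTop := by
    refine tendsto_atTop_mono' _ ?_ tendsto_natCast_atTop_atTop
    filter_upwards [hφ_top.eventually_ge_atTop 1] with n hn
    exact le_mul_of_one_le_right n.cast_nonneg hn
  obtain ⟨N, hN⟩ := eventually_atTop.1 <| (eventually_ge_atTop 1).and <|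
    (hφ_top.eventually_ge_atTop 1).and <| hx_top.eventually <|
      eventually_add_mul_logb_le_self (logb 2 3 - logb 2 C + 2) (2 * α)
  refine ⟨C, hC, N, fun n hn => ?_⟩
  obtain ⟨hn1, hφ1, hx⟩ := hN n hn
  exact le_lipWidth_of_le_entropyNum hK.isBounded hα.le hC hC1 hCc₁ hn1 hφ1 hx hε
end

section
/- Let K be a compact subset of a Banach space X, φ : ℕ → ℝ with φ(n) → ∞, and γ_n = 2^{φ(n)}. Then for all n sufficiently large (depending only on rad(K) and the growth of φ), d_n^{γ_n}(K)_X ≤ ε_{n·⌈φ(n)/2⌉}(K)_X. -/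
variable {X : Type*} [NormedAddCommGroup X] [NormedSpace ℝ X] [CompleteSpace X]

/-! Let `K ⊆ closedBall f₀ R` be covered by `2^(n k)` balls of radius `ε`. Index the centres by a
grid of `(2^k)^n` points of the unit ball of `ℓ∞^n`, pairwise `2^(1-k)`-apart, and glue tent
functions of width `2^(-k)` at the grid points: the resulting map `ℓ∞^n → X` passes through every
centre and is `4 R 2^k`-Lipschitz. With `k = ⌈φ(n)/2⌉` this constant is at most `2^φ(n)` as soon as
`2^(φ(n)/2) ≥ 8 R`. -/

open Metric Finset Filter

section Tent

variable {E F : Type*} [SeminormedAddCommGroup E] [SeminormedAddCommGroup F] [NormedSpace ℝ F]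

noncomputable def tent (δ : ℝ) (p y : E) : ℝ := max (1 - ‖y - p‖ / δ) 0

lemma tent_self (δ : ℝ) (p : E) : tent δ p p = 1 := by simp [tent]

lemma tent_eq_zero_of_le {δ : ℝ} {p y : E} (hδ : 0 < δ) (h : δ ≤ ‖y - p‖) : tent δ p y = 0 :=
  max_eq_right (by rw [sub_nonpos, le_div_iff₀ hδ]; linarith)

lemma norm_sub_lt_of_tent_ne_zero {δ : ℝ} {p y : E} (hδ : 0 < δ) (h : tent δ p y ≠ 0) :
    ‖y - p‖ < δ :=
  lt_of_not_ge fun hle => h (tent_eq_zero_of_le hδ hle)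

lemma abs_tent_sub_tent_le {δ : ℝ} (hδ : 0 < δ) (p y y' : E) :
    |tent δ p y - tent δ p y'| ≤ ‖y - y'‖ / δ :=
  calc |tent δ p y - tent δ p y'| ≤ |(1 - ‖y - p‖ / δ) - (1 - ‖y' - p‖ / δ)| :=
        abs_max_sub_max_le_abs _ _ _
    _ = |‖y - p‖ - ‖y' - p‖| / δ := by
        rw [show (1 - ‖y - p‖ / δ) - (1 - ‖y' - p‖ / δ) = (‖y' - p‖ - ‖y - p‖) / δ by ring,
          abs_div, abs_of_pos hδ, abs_sub_comm]
    _ ≤ ‖y - y'‖ / δ := by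
        gcongr
        simpa using abs_norm_sub_norm_le (y - p) (y' - p)

variable {ι : Type*} {δ : ℝ} {p : ι → E}

lemma tent_eq_zero_of_pairwise (hδ : 0 < δ) (hp : Pairwise fun i j => 2 * δ ≤ ‖p i - p j‖)
    {i j : ι} (hij : i ≠ j) : tent δ (p i) (p j) = 0 :=
  tent_eq_zero_of_le hδ (by linarith [hp hij.symm])

lemma eq_of_tent_ne_zero (hδ : 0 < δ) (hp : Pairwise fun i j => 2 * δ ≤ ‖p i - p j‖) {y : E}
    {i j : ι} (hi : tent δ (p i) y ≠ 0) (hj : tent δ (p j) y ≠ 0) : i = j := by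
  by_contra hij
  have hsep := hp hij
  have hyi := norm_sub_lt_of_tent_ne_zero hδ hi
  have hyj := norm_sub_lt_of_tent_ne_zero hδ hj
  have htri := norm_sub_le_norm_sub_add_norm_sub (p i) y (p j)
  rw [norm_sub_rev (p i) y] at htri
  linarith

lemma card_filter_tent_ne_zero_le_one [Fintype ι] (hδ : 0 < δ)
    (hp : Pairwise fun i j => 2 * δ ≤ ‖p i - p j‖) (y : E) :
    #(univ.filter fun i => tent δ (p i) y ≠ 0) ≤ 1 :=
  card_le_one.mpr fun _ hi _ hj =>
    eq_of_tent_ne_zero hδ hp (mem_filter.mp hi).2 (mem_filter.mp hj).2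

noncomputable def tentInterp [Fintype ι] (δ : ℝ) (p : ι → E) (c : ι → F) (y : E) : F :=
  ∑ i, tent δ (p i) y • c i

lemma tentInterp_apply_point [Fintype ι] (hδ : 0 < δ)
    (hp : Pairwise fun i j => 2 * δ ≤ ‖p i - p j‖) (c : ι → F) (i : ι) :
    tentInterp δ p c (p i) = c i := by
  rw [tentInterp, sum_eq_single i (fun j _ hji => by rw [tent_eq_zero_of_pairwise hδ hp hji,
    zero_smul]) (fun hi => absurd (mem_univ i) hi), tent_self, one_smul]

/-- At most two tents are nonzero at `y` or `y'`, whence the factor `2`. -/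
lemma norm_tentInterp_sub_le [Fintype ι] (hδ : 0 < δ)
    (hp : Pairwise fun i j => 2 * δ ≤ ‖p i - p j‖) {c : ι → F} {M : ℝ} (hM : 0 ≤ M)
    (hc : ∀ i, ‖c i‖ ≤ M) (y y' : E) :
    ‖tentInterp δ p c y - tentInterp δ p c y'‖ ≤ 2 * M / δ * ‖y - y'‖ := by
  classical
  set s := univ.filter (fun i => tent δ (p i) y ≠ 0) ∪ univ.filter (fun i => tent δ (p i) y' ≠ 0)
    with hs_def
  have hs : #s ≤ 2 := (card_union_le _ _).trans <| add_le_add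
    (card_filter_tent_ne_zero_le_one hδ hp y) (card_filter_tent_ne_zero_le_one hδ hp y')
  have hsupp : tentInterp δ p c y - tentInterp δ p c y' =
      ∑ i ∈ s, (tent δ (p i) y - tent δ (p i) y') • c i := by
    simp only [tentInterp, ← sum_sub_distrib, ← sub_smul]
    refine (sum_subset (subset_univ s) fun i _ hi => ?_).symm
    simp only [hs_def, mem_union, mem_filter, mem_univ, true_and, not_or, not_not] at hi
    rw [hi.1, hi.2, sub_self, zero_smul]
  calc ‖tentInterp δ p c y - tentInterp δ p c y'‖
      ≤ ∑ _i ∈ s, ‖y - y'‖ / δ * M := by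
        rw [hsupp]
        refine norm_sum_le_of_le s fun i _ => ?_
        rw [norm_smul, Real.norm_eq_abs]
        exact mul_le_mul (abs_tent_sub_tent_le hδ _ _ _) (hc i) (norm_nonneg _) (by positivity)
    _ = #s * (‖y - y'‖ / δ * M) := by rw [sum_const, nsmul_eq_mul]
    _ ≤ 2 * (‖y - y'‖ / δ * M) := by gcongr; exact_mod_cast hs
    _ = 2 * M / δ * ‖y - y'‖ := by ring

end Tent

section Grid

variable {n m : ℕ}

noncomputable def gridPoint (m : ℕ) (v : Fin n → Fin m) : Fin n → ℝ :=
  fun i => -1 + (2 * v i + 1) / m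

lemma norm_gridPoint_le_one (v : Fin n → Fin m) : ‖gridPoint m v‖ ≤ 1 := by
  refine (pi_norm_le_iff_of_nonneg zero_le_one).mpr fun i => ?_
  have hvi : ((v i : ℕ) : ℝ) + 1 ≤ m := by exact_mod_cast (v i).isLt
  have hm : (0 : ℝ) < m := by linarith [(v i : ℕ).cast_nonneg (α := ℝ)]
  have hlo : 0 ≤ (2 * ((v i : ℕ) : ℝ) + 1) / m := by positivity
  have hhi : (2 * ((v i : ℕ) : ℝ) + 1) / m ≤ 2 := by rw [div_le_iff₀ hm]; linarith
  rw [Real.norm_eq_abs, abs_le]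
  exact ⟨by simp only [gridPoint]; linarith, by simp only [gridPoint]; linarith⟩

lemma two_mul_inv_le_norm_gridPoint_sub {v w : Fin n → Fin m} (h : v ≠ w) :
    2 * (m : ℝ)⁻¹ ≤ ‖gridPoint m v - gridPoint m w‖ := by
  obtain ⟨i, hi⟩ := Function.ne_iff.mp h
  have hne : ((v i : ℕ) : ℤ) ≠ (w i : ℕ) := by exact_mod_cast Fin.val_ne_of_ne hi
  have hdiff : (1 : ℝ) ≤ |((v i : ℕ) : ℝ) - ((w i : ℕ) : ℝ)| := by
    exact_mod_cast Int.one_le_abs (sub_ne_zero.mpr hne)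
  calc 2 * (m : ℝ)⁻¹ ≤ 2 * |((v i : ℕ) : ℝ) - ((w i : ℕ) : ℝ)| / m := by
        rw [← div_eq_mul_inv]; gcongr; linarith
    _ = ‖(gridPoint m v - gridPoint m w) i‖ := by
        rw [Real.norm_eq_abs, Pi.sub_apply, gridPoint, gridPoint,
          show -1 + (2 * ((v i : ℕ) : ℝ) + 1) / m - (-1 + (2 * ((w i : ℕ) : ℝ) + 1) / m)
            = 2 * (((v i : ℕ) : ℝ) - ((w i : ℕ) : ℝ)) / m by ring,
          abs_div, abs_mul, abs_two, Nat.abs_cast]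
    _ ≤ ‖gridPoint m v - gridPoint m w‖ := norm_le_pi_norm _ i

end Grid

/-- A centre farther than `2 R` from `a` can be moved to `a`: its ball meets `K` only if `ε > R`,
and then the ball of radius `ε` around `a` contains `K`. -/
lemma exists_cover_centers_dist_le {α ι : Type*} [PseudoMetricSpace α] {K : Set α} {a : α}
    {R ε : ℝ} (hR : 0 ≤ R) (hKR : K ⊆ closedBall a R) {g : ι → α}
    (hg : K ⊆ ⋃ j, closedBall (g j) ε) :
    ∃ c : ι → α, (∀ j, dist (c j) a ≤ 2 * R) ∧ K ⊆ ⋃ j, closedBall (c j) ε := by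
  classical
  refine ⟨fun j => if dist (g j) a ≤ 2 * R then g j else a, fun j => ?_, fun f hf => ?_⟩
  · dsimp only
    split_ifs with h
    · exact h
    · simpa using hR
  · obtain ⟨j, hj⟩ := Set.mem_iUnion.mp (hg hf)
    refine Set.mem_iUnion.mpr ⟨j, ?_⟩
    dsimp only
    split_ifs with h
    · exact hj
    · have hfa : dist f a ≤ R := hKR hf
      have hfj : dist f (g j) ≤ ε := hj
      have htri := dist_triangle_left (g j) a f
      exact mem_closedBall.mpr (by linarith)

section LipWidth

variable {Y : Type*} [NormedAddCommGroup Y]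

lemma isNorm_norm (n : ℕ) : IsNorm fun y : Fin n → ℝ => ‖y‖ :=
  ⟨fun _ => norm_eq_zero, fun a y => by simp only [norm_smul, Real.norm_eq_abs], norm_add_le⟩

lemma lipWidth_le_of_lipschitz {K : Set Y} {n : ℕ} {γ ε : ℝ} (L : (Fin n → ℝ) → Y)
    (hL : ∀ y y', ‖L y - L y'‖ ≤ γ * ‖y - y'‖) (hε : 0 ≤ ε)
    (hK : ∀ f ∈ K, ∃ y, ‖y‖ ≤ 1 ∧ ‖f - L y‖ ≤ ε) : lipWidth K n γ ≤ ε := by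
  have hwidth : fixedLipWidth K (fun y : Fin n → ℝ => ‖y‖) γ ≤ ε := by
    refine (ciInf_le ⟨0, ?_⟩ ⟨L, fun y y' _ _ => hL y y'⟩).trans
      (Real.iSup_le (fun f => ?_) hε)
    · rintro _ ⟨L', rfl⟩
      exact Real.iSup_nonneg fun f => Real.iInf_nonneg fun y => norm_nonneg _
    · obtain ⟨y, hy, hfy⟩ := hK f f.2
      exact ciInf_le_of_le ⟨0, by rintro _ ⟨y, rfl⟩; exact norm_nonneg _⟩ ⟨y, hy⟩ hfy
  refine (ciInf_le ⟨0, ?_⟩ ⟨_, isNorm_norm n⟩).trans hwidth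
  rintro _ ⟨N, rfl⟩
  exact Real.iInf_nonneg fun L => Real.iSup_nonneg fun f => Real.iInf_nonneg fun y => norm_nonneg _

theorem lipWidth_le_of_cover [NormedSpace ℝ Y] {ι : Type*} [Fintype ι] {K : Set Y} {f₀ : Y}
    {R ε γ : ℝ} {n m : ℕ} (hR : 0 ≤ R) (hKR : K ⊆ closedBall f₀ R) (hm : 0 < m)
    (hι : Fintype.card ι ≤ m ^ n) {g : ι → Y} (hg : K ⊆ ⋃ j, closedBall (g j) ε)
    (hε : 0 ≤ ε) (hγ : 4 * R * m ≤ γ) : lipWidth K n γ ≤ ε := by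
  obtain ⟨c, hc, hKc⟩ := exists_cover_centers_dist_le hR hKR hg
  obtain ⟨e⟩ : Nonempty (ι ↪ (Fin n → Fin m)) :=
    Function.Embedding.nonempty_of_card_le (by simpa using hι)
  have hδ : (0 : ℝ) < (m : ℝ)⁻¹ := by positivity
  have hp : Pairwise fun i j => 2 * (m : ℝ)⁻¹ ≤ ‖gridPoint m (e i) - gridPoint m (e j)‖ :=
    fun i j hij => two_mul_inv_le_norm_gridPoint_sub (e.injective.ne hij)
  set I := tentInterp (m : ℝ)⁻¹ (fun j => gridPoint m (e j)) fun j => c j - f₀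
  refine lipWidth_le_of_lipschitz (fun y => f₀ + I y) (fun y y' => ?_) hε fun f hf => ?_
  · calc ‖f₀ + I y - (f₀ + I y')‖ = ‖I y - I y'‖ := by rw [add_sub_add_left_eq_sub]
      _ ≤ 2 * (2 * R) / (m : ℝ)⁻¹ * ‖y - y'‖ :=
        norm_tentInterp_sub_le hδ hp (by positivity) (fun j => (dist_eq_norm _ _).symm.trans_le
          (hc j)) y y'
      _ ≤ γ * ‖y - y'‖ := by gcongr; rw [div_inv_eq_mul]; linarith
  · obtain ⟨j, hj⟩ := Set.mem_iUnion.mp (hKc hf)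
    refine ⟨gridPoint m (e j), norm_gridPoint_le_one _, ?_⟩
    rw [show I (gridPoint m (e j)) = c j - f₀ from tentInterp_apply_point hδ hp _ j,
      add_sub_cancel, ← dist_eq_norm]
    exact hj

lemma le_entropyNum_of_forall_cover {K : Set Y} {f₀ : Y} {R a : ℝ} (hKR : K ⊆ closedBall f₀ R)
    {m : ℕ}
    (h : ∀ ε > 0, ∀ g : Fin (2 ^ m) → Y, K ⊆ ⋃ j, closedBall (g j) ε → a ≤ ε) :
    a ≤ entropyNum K m := by
  refine le_csInf ⟨max R 0 + 1, by positivity, fun _ => f₀, ?_⟩ fun ε ⟨hε, g, hg⟩ => h ε hε g hg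
  rw [Set.iUnion_const]
  exact hKR.trans (closedBall_subset_closedBall (by linarith [le_max_left R 0]))

end LipWidth

lemma two_pow_ceil_half_le {x : ℝ} (hx : 0 ≤ x) : (2 : ℝ) ^ ⌈x / 2⌉₊ ≤ 2 * 2 ^ (x / 2) := by
  rw [← Real.rpow_natCast, mul_comm, ← Real.rpow_add_one two_ne_zero]
  exact Real.rpow_le_rpow_of_exponent_le one_le_two (Nat.ceil_lt_add_one (by positivity)).le

/-- for `γ_n = 2^{φ(n)}` with `φ(n) → ∞`, for all sufficiently large `n`
one has `d_n^{γ_n}(K)_X ≤ ε_{n⌈φ(n)/2⌉}(K)_X`. -/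
theorem lipWidth_le_entropy_half (K : Set X) (hK : IsCompact K)
    (φ : ℕ → ℝ) (hφ : Filter.Tendsto φ Filter.atTop Filter.atTop) :
    ∃ n₀ : ℕ, ∀ n ≥ n₀,
      lipWidth K n ((2 : ℝ) ^ φ n) ≤ entropyNum K (n * ⌈φ n / 2⌉₊) := by
  obtain ⟨r, hr⟩ := hK.isBounded.subset_closedBall (0 : X)
  set R := max r 0
  have hR : 0 ≤ R := le_max_right r 0
  have hKR : K ⊆ closedBall 0 R := hr.trans (closedBall_subset_closedBall (le_max_left r 0))
  have hgrowth : Tendsto (fun n => (2 : ℝ) ^ (φ n / 2)) atTop atTop :=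
    (tendsto_rpow_atTop_of_base_gt_one 2 one_lt_two).comp (hφ.atTop_div_const two_pos)
  obtain ⟨n₀, hn₀⟩ := eventually_atTop.mp
    ((hφ.eventually_ge_atTop 0).and (hgrowth.eventually_ge_atTop (8 * R)))
  refine ⟨n₀, fun n hn => le_entropyNum_of_forall_cover hKR fun ε hε g hg => ?_⟩
  obtain ⟨hφ0, hφR⟩ := hn₀ n hn
  have hγ : 4 * R * ((2 ^ ⌈φ n / 2⌉₊ : ℕ) : ℝ) ≤ (2 : ℝ) ^ φ n :=
    calc 4 * R * ((2 ^ ⌈φ n / 2⌉₊ : ℕ) : ℝ) ≤ 4 * R * (2 * 2 ^ (φ n / 2)) := by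
          push_cast; gcongr; exact two_pow_ceil_half_le hφ0
      _ = 8 * R * 2 ^ (φ n / 2) := by ring
      _ ≤ 2 ^ (φ n / 2) * 2 ^ (φ n / 2) := by gcongr
      _ = 2 ^ φ n := by rw [← Real.rpow_add two_pos, add_halves]
  exact lipWidth_le_of_cover hR hKR (by positivity) (by rw [Fintype.card_fin, ← pow_mul'])
    hg hε.le hγ
end

section
/- Let Σ_n (n ≥ 1) be compact subsets of a Banach space Y that is continuously embedded in a Banach space X, and let (ξ_n) be nonnegative reals with inf_n ξ_n = 0. Define V_n := {f ∈ X : dist(f, Σ_n)_X ≤ ξ_n}. Then K := ⋂_{n≥1} V_n is a compact subset of X. -/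
/-- if `Σ_n ⊆ Y` are compact, `Y` is continuously embedded (via `ι`) in `X`,
and `ξ_n ≥ 0` with `inf_n ξ_n = 0`, then `K = ⋂_{n ≥ 1} {f : dist(f, Σ_n)_X ≤ ξ_n}` is a
compact subset of `X`.  (Since each `Σ_n` is compact, `dist(f, Σ_n)_X ≤ ξ_n` is expressed
by the existence of a closest element.) -/
theorem compact_intersection_of_approx_sets {Y X : Type*}
    [NormedAddCommGroup Y] [NormedSpace ℝ Y] [CompleteSpace Y]
    [NormedAddCommGroup X] [NormedSpace ℝ X] [CompleteSpace X]
    (ι : Y →ₗ[ℝ] X) (hinj : Function.Injective ι)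
    (C : ℝ) (hC : 0 < C) (hemb : ∀ v : Y, ‖ι v‖ ≤ C * ‖v‖)
    (S : ℕ → Set Y) (hS : ∀ n : ℕ, 1 ≤ n → IsCompact (S n))
    (ξ : ℕ → ℝ) (hξnn : ∀ n, 0 ≤ ξ n)
    (hinf : ∀ ε > (0 : ℝ), ∃ n : ℕ, 1 ≤ n ∧ ξ n < ε) :
    IsCompact (⋂ n ∈ {n : ℕ | 1 ≤ n}, {f : X | ∃ g ∈ S n, ‖f - ι g‖ ≤ ξ n}) := by
  have ιc : Continuous ι := (ι.mkContinuous C hemb).continuous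
  rw [isCompact_iff_totallyBounded_isComplete]
  constructor
  · rw [Metric.totallyBounded_iff]
    intro ε hε
    obtain ⟨n, hn1, hnε⟩ := hinf (ε / 2) (by linarith)
    have hTB := ((hS n hn1).image ιc).totallyBounded
    obtain ⟨t, htf, hcov⟩ := Metric.totallyBounded_iff.mp hTB (ε / 2) (by linarith)
    refine ⟨t, htf, ?_⟩
    intro f hf
    simp only [Set.mem_iInter] at hf
    obtain ⟨g, hg, hfg⟩ := hf n hn1
    obtain ⟨y, hy, hdy⟩ := Set.mem_iUnion₂.mp (hcov ⟨g, hg, rfl⟩)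
    refine Set.mem_iUnion₂.mpr ⟨y, hy, ?_⟩
    rw [Metric.mem_ball] at hdy ⊢
    have h2 : dist f (ι g) = ‖f - ι g‖ := dist_eq_norm _ _
    have h1 := dist_triangle f (ι g) y
    linarith
  · apply IsClosed.isComplete
    apply isClosed_biInter
    intro n hn
    by_cases hne : (S n).Nonempty
    · have heq : {f : X | ∃ g ∈ S n, ‖f - ι g‖ ≤ ξ n}
          = {f : X | Metric.infDist f (ι '' S n) ≤ ξ n} := by
        ext f
        constructor
        · rintro ⟨g, hg, h⟩
          exact le_trans (Metric.infDist_le_dist_of_mem (Set.mem_image_of_mem ι hg))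
            (by rw [dist_eq_norm]; exact h)
        · intro h
          obtain ⟨x, hx, hxd⟩ := ((hS n hn).image ιc).exists_infDist_eq_dist (hne.image ι) f
          obtain ⟨g, hg, rfl⟩ := hx
          exact ⟨g, hg, by rw [← dist_eq_norm, ← hxd]; exact h⟩
      rw [heq]
      exact isClosed_le (Metric.continuous_infDist_pt _) continuous_const
    · have : {f : X | ∃ g ∈ S n, ‖f - ι g‖ ≤ ξ n} = ∅ := by
        simp [Set.not_nonempty_iff_eq_empty.mp hne]
      rw [this]
      exact isClosed_empty
end

section
/- Let (a_n) be a monotone non-increasing sequence of nonnegative reals and φ : [1,∞) → ℝ increasing, nonnegative, with φ(n) → ∞. Suppose there are constants c > 1, α > 0, β ∈ ℝ, and C₁, C₂ > 0 such that C₁·[log₂(cn·φ(cn))]^β·[cn·φ(cn)]^{−α} ≤ a_{cn⌈φ(cn)/2⌉} ≤ C₂·[log₂(n·φ(n))]^β·[n·φ(n)]^{−α} for all large n, and suppose sup_{n} φ(c₁n)/φ(n) < ∞ for some c₁ > 1. Then there exist constants C₃, C₄ > 0 with C₃·(log₂ m)^β·m^{−α} ≤ a_m ≤ C₄·(log₂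 m)^β·m^{−α} for all sufficiently large m. -/
open Real in
lemma comp_aux17 (α β L : ℝ) (hα : 0 < α) (hL : 1 ≤ L) :
    ∃ D > (0:ℝ), ∀ u v : ℝ, max 4 (L^2) ≤ u → u / L ≤ v → v ≤ L * u →
      Real.logb 2 v ^ β * v ^ (-α) ≤ D * (Real.logb 2 u ^ β * u ^ (-α)) := by
  have hL0 : (0:ℝ) < L := lt_of_lt_of_le one_pos hL
  refine ⟨(2:ℝ) ^ |β| * L ^ α, by positivity, fun u v hu hvl hvu => ?_⟩
  have hu4 : (4:ℝ) ≤ u := le_trans (le_max_left _ _) hu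
  have huL : L ^ 2 ≤ u := le_trans (le_max_right _ _) hu
  have hu0 : (0:ℝ) < u := by linarith
  have hv0 : (0:ℝ) < v := lt_of_lt_of_le (by positivity) hvl
  have hlogu4 : (2:ℝ) ≤ Real.logb 2 u := by
    rw [Real.le_logb_iff_rpow_le one_lt_two hu0]
    rw [show ((2:ℝ):ℝ) = ((2:ℕ):ℝ) by norm_num, Real.rpow_natCast]
    norm_num; linarith
  have hlogu0 : (0:ℝ) < Real.logb 2 u := by linarith
  have hlogL : Real.logb 2 L ≤ Real.logb 2 u / 2 := by
    have h1 : Real.logb 2 (L^2) ≤ Real.logb 2 u :=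
      Real.logb_le_logb_of_le one_lt_two (by positivity) huL
    rw [Real.logb_pow] at h1
    push_cast at h1
    linarith
  have hlogL0 : 0 ≤ Real.logb 2 L := Real.logb_nonneg one_lt_two hL
  have hlogv_lb : Real.logb 2 u / 2 ≤ Real.logb 2 v := by
    have h1 : Real.logb 2 (u / L) ≤ Real.logb 2 v :=
      Real.logb_le_logb_of_le one_lt_two (by positivity) hvl
    rw [Real.logb_div (ne_of_gt hu0) (ne_of_gt hL0)] at h1
    linarith
  have hlogv_ub : Real.logb 2 v ≤ 2 * Real.logb 2 u := by
    have h1 : Real.logb 2 v ≤ Real.logb 2 (L * u) :=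
      Real.logb_le_logb_of_le one_lt_two hv0 hvu
    rw [Real.logb_mul (ne_of_gt hL0) (ne_of_gt hu0)] at h1
    linarith
  have hlogv0 : (0:ℝ) < Real.logb 2 v := by linarith
  -- v ^ (-α) ≤ L ^ α * u ^ (-α)
  have h2 : v ^ (-α) ≤ L ^ α * u ^ (-α) := by
    have := Real.rpow_le_rpow_of_nonpos (by positivity : (0:ℝ) < u / L) hvl
      (neg_nonpos.mpr hα.le)
    calc v ^ (-α) ≤ (u / L) ^ (-α) := this
      _ = L ^ α * u ^ (-α) := by
          rw [Real.div_rpow hu0.le hL0.le, Real.rpow_neg hu0.le, Real.rpow_neg hL0.le]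
          field_simp
  -- logb part
  have h3 : Real.logb 2 v ^ β ≤ (2:ℝ) ^ |β| * Real.logb 2 u ^ β := by
    rcases le_or_gt 0 β with hβ | hβ
    · rw [abs_of_nonneg hβ]
      calc Real.logb 2 v ^ β ≤ (2 * Real.logb 2 u) ^ β :=
            Real.rpow_le_rpow hlogv0.le hlogv_ub hβ
        _ = (2:ℝ) ^ β * Real.logb 2 u ^ β := Real.mul_rpow (by norm_num) hlogu0.le
    · rw [abs_of_neg hβ]
      calc Real.logb 2 v ^ β ≤ (Real.logb 2 u / 2) ^ β :=
            Real.rpow_le_rpow_of_nonpos (by positivity) hlogv_lb hβ.le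
        _ = (2:ℝ) ^ (-β) * Real.logb 2 u ^ β := by
            rw [Real.div_rpow hlogu0.le (by norm_num), Real.rpow_neg (by norm_num : (0:ℝ) ≤ 2)]
            field_simp
  calc Real.logb 2 v ^ β * v ^ (-α)
      ≤ ((2:ℝ) ^ |β| * Real.logb 2 u ^ β) * (L ^ α * u ^ (-α)) :=
        mul_le_mul h3 h2 (Real.rpow_nonneg hv0.le _)
          (by positivity)
    _ = (2:ℝ) ^ |β| * L ^ α * (Real.logb 2 u ^ β * u ^ (-α)) := by ring

set_option maxHeartbeats 4000000 in
/-- if a non-increasing nonnegative sequence `a` is sandwiched along the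
subsequence `cn⌈φ(cn)⌉` between two comparable expressions, then `a_m ≍ (log₂ m)^β m^{-α}`. -/
theorem sandwich_implies_asymptotics (a : ℕ → ℝ) (ha : Antitone a)
    (hann : ∀ n, 0 ≤ a n)
    (φ : ℝ → ℝ) (hmono : MonotoneOn φ (Set.Ici 1)) (hnn : ∀ t : ℝ, 1 ≤ t → 0 ≤ φ t)
    (hlim : Filter.Tendsto (fun n : ℕ => φ n) Filter.atTop Filter.atTop)
    (c : ℕ) (hc : 2 ≤ c) (α β : ℝ) (hα : 0 < α)
    (C₁ C₂ : ℝ) (hC₁ : 0 < C₁) (hC₂ : 0 < C₂)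
    (hbound : ∃ N : ℕ, ∀ n ≥ N,
      C₁ * Real.logb 2 ((c * n : ℕ) * φ (c * n : ℕ)) ^ β *
          (((c * n : ℕ) : ℝ) * φ (c * n : ℕ)) ^ (-α) ≤
        a (c * n * ⌈φ (c * n : ℕ) / 2⌉₊) ∧
      a (c * n * ⌈φ (c * n : ℕ) / 2⌉₊) ≤
        C₂ * Real.logb 2 ((n : ℝ) * φ n) ^ β * ((n : ℝ) * φ n) ^ (-α))
    (hsup : ∃ c₁ > (1 : ℝ), ∃ M : ℝ, ∀ n : ℕ, 1 ≤ n → φ (c₁ * n) ≤ M * φ n) :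
    ∃ C₃ > (0 : ℝ), ∃ C₄ > (0 : ℝ), ∃ M₀ : ℕ, ∀ m ≥ M₀,
      C₃ * Real.logb 2 m ^ β * (m : ℝ) ^ (-α) ≤ a m ∧
      a m ≤ C₄ * Real.logb 2 m ^ β * (m : ℝ) ^ (-α) := by
  obtain ⟨c₁, hc₁, M, hM⟩ := hsup
  obtain ⟨N, hN⟩ := hbound
  set M' : ℝ := max M 1 with hM'def
  have hM'1 : (1:ℝ) ≤ M' := le_max_right _ _
  have hM'0 : (0:ℝ) ≤ M' := by linarith
  have hc₁0 : (0:ℝ) < c₁ := by linarith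
  have hc₁1 : (1:ℝ) ≤ c₁ := hc₁.le
  -- step lemma
  have hstep : ∀ s : ℝ, 1 ≤ s → φ (c₁ * s) ≤ M' * φ (s + 1) := by
    intro s hs
    have hs0 : (0:ℝ) < s := by linarith
    have hceil1 : 1 ≤ ⌈s⌉₊ := Nat.one_le_ceil_iff.mpr hs0
    have hceilR : (1:ℝ) ≤ (⌈s⌉₊ : ℝ) := by exact_mod_cast hceil1
    have h1 : φ (c₁ * s) ≤ φ (c₁ * ⌈s⌉₊) := by
      apply hmono (by simp [Set.mem_Ici]; nlinarith) (by simp [Set.mem_Ici]; nlinarith)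
      have := Nat.le_ceil s
      nlinarith
    have h2 : φ (c₁ * ⌈s⌉₊) ≤ M * φ ⌈s⌉₊ := hM _ hceil1
    have h3 : M * φ ⌈s⌉₊ ≤ M' * φ ⌈s⌉₊ :=
      mul_le_mul_of_nonneg_right (le_max_left _ _) (hnn _ hceilR)
    have h4 : φ (⌈s⌉₊:ℝ) ≤ φ (s + 1) := by
      apply hmono (by simp [Set.mem_Ici]; linarith) (by simp [Set.mem_Ici]; linarith)
      exact le_of_lt (Nat.ceil_lt_add_one hs0.le)
    nlinarith
  -- iterated lemma
  have hiter : ∀ k : ℕ, ∀ t : ℝ, 1 ≤ t → φ (c₁ ^ k * t) ≤ M' ^ k * φ (t + k) := by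
    intro k
    induction k with
    | zero => intro t ht; simp
    | succ k ih =>
      intro t ht
      have h1 : φ (c₁ ^ (k+1) * t) = φ (c₁ ^ k * (c₁ * t)) := by ring_nf
      have h2 : φ (c₁ ^ k * (c₁ * t)) ≤ M' ^ k * φ (c₁ * t + k) := ih _ (by nlinarith)
      have h3 : φ (c₁ * t + k) ≤ φ (c₁ * (t + k)) := by
        have hk0 : (0:ℝ) ≤ (k:ℝ) := Nat.cast_nonneg k
        apply hmono (by simp [Set.mem_Ici]; nlinarith) (by simp [Set.mem_Ici]; nlinarith)
        have : (0:ℝ) ≤ k := Nat.cast_nonneg k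
        nlinarith
      have h4 : φ (c₁ * (t + k)) ≤ M' * φ (t + k + 1) := hstep _ (by have : (0:ℝ) ≤ (k:ℝ) := Nat.cast_nonneg k; linarith)
      have hMk : (0:ℝ) ≤ M' ^ k := by positivity
      have : φ (c₁ ^ (k+1) * t) ≤ M' ^ k * (M' * φ (t + k + 1)) := by
        rw [h1]; nlinarith
      calc φ (c₁ ^ (k+1) * t) ≤ M' ^ k * (M' * φ (t + k + 1)) := this
        _ = M' ^ (k+1) * φ (t + (k+1:ℕ)) := by push_cast; ring_nf
  -- choose k₀ with 4c < c₁^k₀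
  obtain ⟨k₀, hk₀⟩ := pow_unbounded_of_one_lt (4 * (c:ℝ)) hc₁
  set K : ℝ := M' ^ k₀ with hKdef
  have hK1 : (1:ℝ) ≤ K := one_le_pow₀ hM'1
  have hK : ∀ n : ℕ, 2 * k₀ + 2 ≤ n → φ (2 * c * n) ≤ K * φ n := by
    intro n hn
    set t : ℝ := (n:ℝ) - k₀ with htdef
    have hnk : (k₀:ℝ) + 1 ≤ (n:ℝ) := by exact_mod_cast Nat.succ_le_of_lt (by omega)
    have ht1 : (1:ℝ) ≤ t := by simp [htdef]; linarith
    have htn : (n:ℝ) ≤ 2 * t := by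
      have : (2*k₀:ℝ) ≤ n := by exact_mod_cast (by omega : 2*k₀ ≤ n)
      simp [htdef]; linarith
    have hcR : (2:ℝ) ≤ c := by exact_mod_cast hc
    have harg : 2 * (c:ℝ) * n ≤ c₁ ^ k₀ * t := by nlinarith [hk₀]
    have h1 : φ (2 * (c:ℝ) * n) ≤ φ (c₁ ^ k₀ * t) := by
      apply hmono (by simp [Set.mem_Ici]; nlinarith) (by simp [Set.mem_Ici]; nlinarith) harg
    have h2 : φ (c₁ ^ k₀ * t) ≤ K * φ (t + k₀) := hiter k₀ t ht1
    have h3 : t + (k₀:ℝ) = n := by simp [htdef]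
    rw [h3] at h2
    linarith
  
  -- φ eventually ≥ 2
  obtain ⟨N₂, hN₂⟩ := Filter.eventually_atTop.mp (hlim.eventually_ge_atTop 2)
  have hcR : (2:ℝ) ≤ (c:ℝ) := by exact_mod_cast hc
  set L : ℝ := 2 * c * K with hLdef
  have hL1 : (1:ℝ) ≤ L := by nlinarith
  have hL0 : (0:ℝ) < L := by linarith
  obtain ⟨D, hD, hcomp⟩ := comp_aux17 α β L hα hL1
  set N₀ : ℕ := max (max N N₂) (2*k₀+2) + 1 with hN₀def
  have hNN₀ : N ≤ N₀ := le_trans (le_trans (le_max_left N N₂) (le_max_left _ _)) (Nat.le_succ _)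
  have hN₂N₀ : N₂ ≤ N₀ := le_trans (le_trans (le_max_right N N₂) (le_max_left _ _)) (Nat.le_succ _)
  have hkN₀ : 2*k₀+2 ≤ N₀ := le_trans (le_max_right _ _) (Nat.le_succ _)
  have hN₀1 : 1 ≤ N₀ := by omega
  set b : ℕ → ℕ := fun j => c * j * ⌈φ (c * j : ℕ) / 2⌉₊ with hbdef
  -- b j ≥ j for j ≥ N₂
  have hbj : ∀ j : ℕ, N₂ ≤ j → j ≤ b j := by
    intro j hj
    have hcj : N₂ ≤ c * j := le_trans hj (Nat.le_mul_of_pos_left j (by omega))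
    have h2 : 2 ≤ φ (c*j : ℕ) := hN₂ _ hcj
    have hceil : 1 ≤ ⌈φ (c * j : ℕ) / 2⌉₊ := Nat.one_le_ceil_iff.mpr (by positivity)
    calc j ≤ c * j := Nat.le_mul_of_pos_left j (by omega)
      _ ≤ c * j * ⌈φ (c * j : ℕ) / 2⌉₊ := Nat.le_mul_of_pos_right _ (by omega)
  set T : ℝ := max 4 (L^2) with hTdef
  refine ⟨C₁ / D, by positivity, C₂ * D, by positivity, max (b N₀) ⌈T⌉₊ + 1, fun m hm => ?_⟩
  have hmb : b N₀ ≤ m := by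
    have := le_max_left (b N₀) ⌈T⌉₊; omega
  have hmT : T ≤ (m:ℝ) := by
    have h1 : ⌈T⌉₊ ≤ m := by have := le_max_right (b N₀) ⌈T⌉₊; omega
    exact le_trans (Nat.le_ceil T) (by exact_mod_cast h1)
  have hm4 : (4:ℝ) ≤ (m:ℝ) := le_trans (le_max_left _ _) hmT
  -- find n with b n ≤ m < b (n+1)
  have hex : ∃ k, m < b (N₀ + 1 + k) := by
    refine ⟨m, ?_⟩
    have := hbj (N₀ + 1 + m) (by omega)
    omega
  set k : ℕ := Nat.find hex with hkdef
  have hk1 : m < b (N₀ + 1 + k) := Nat.find_spec hex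
  set n : ℕ := N₀ + k with hndef
  have hm1 : m < b (n + 1) := by
    have : N₀ + 1 + k = n + 1 := by omega
    rwa [this] at hk1
  have hbn : b n ≤ m := by
    rcases Nat.eq_zero_or_pos k with hk0 | hk0
    · have : n = N₀ := by omega
      rw [this]; exact hmb
    · have hmin := Nat.find_min hex (show k - 1 < k by omega)
      push_neg at hmin
      have : N₀ + 1 + (k - 1) = n := by omega
      rwa [this] at hmin
  clear_value k
  clear hk1 hkdef hex
  have hnN₀ : N₀ ≤ n := by omega
  clear_value n
  have hn1 : 1 ≤ n := le_trans hN₀1 hnN₀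
  have hn1R : (1:ℝ) ≤ (n:ℝ) := by exact_mod_cast hn1
  have hφn : 2 ≤ φ n := hN₂ n (le_trans hN₂N₀ hnN₀)
  have hφcn : 2 ≤ φ (c*n : ℕ) := hN₂ _ (le_trans (le_trans hN₂N₀ hnN₀) (Nat.le_mul_of_pos_left n (by omega)))
  have hφcn1 : 2 ≤ φ (c*(n+1) : ℕ) := hN₂ _ (by
    have : n ≤ c * (n+1) :=
      le_trans (Nat.le_succ n) (Nat.le_mul_of_pos_left _ (by omega))
    exact le_trans (le_trans hN₂N₀ hnN₀) this)
  have hcnR : ((c*n : ℕ) : ℝ) = (c:ℝ) * n := by push_cast; ring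
  have hcn1R : ((c*(n+1) : ℕ) : ℝ) = (c:ℝ) * n + c := by push_cast; ring
  -- x ≤ b n
  have hbnR : (b n : ℝ) = (c:ℝ) * n * (⌈φ (c * n : ℕ) / 2⌉₊ : ℝ) := by
    simp only [hbdef]; push_cast; ring
  have hbn1R : (b (n+1) : ℝ) = ((c:ℝ) * n + c) * (⌈φ (c * (n+1) : ℕ) / 2⌉₊ : ℝ) := by
    simp only [hbdef]; push_cast; ring
  have hφmono_n : φ (n:ℝ) ≤ φ ((c*n : ℕ) : ℝ) := by
    apply hmono (by simpa using hn1R) (by rw [hcnR]; simp [Set.mem_Ici]; nlinarith)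
    rw [hcnR]; nlinarith
  have hx_bn : (n:ℝ) * φ n ≤ (b n : ℝ) := by
    rw [hbnR]
    have hceil := Nat.le_ceil (φ (c * n : ℕ) / 2)
    nlinarith
  have hx_m : (n:ℝ) * φ n ≤ (m:ℝ) := le_trans hx_bn (by exact_mod_cast hbn)
  have hm_bn1 : (m:ℝ) < (b (n+1) : ℝ) := by exact_mod_cast hm1
  -- b (n+1) ≤ y
  have hbn1_y : (b (n+1) : ℝ) ≤ ((c*(n+1) : ℕ) : ℝ) * φ (c*(n+1) : ℕ) := by
    have hceil : (⌈φ (c * (n+1) : ℕ) / 2⌉₊ : ℝ) < φ (c * (n+1) : ℕ) / 2 + 1 :=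
      Nat.ceil_lt_add_one (by positivity)
    have hceil2 : (⌈φ (c * (n+1) : ℕ) / 2⌉₊ : ℝ) ≤ φ (c * (n+1) : ℕ) := by linarith
    rw [hbn1R, ← hcn1R]
    exact mul_le_mul_of_nonneg_left hceil2 (Nat.cast_nonneg _)
  -- y ≤ L * x
  have hy_Lx : ((c*(n+1) : ℕ) : ℝ) * φ (c*(n+1) : ℕ) ≤ L * ((n:ℝ) * φ n) := by
    have h1 : ((c*(n+1) : ℕ) : ℝ) ≤ 2 * (c:ℝ) * n := by rw [hcn1R]; nlinarith
    have h2 : φ ((c*(n+1) : ℕ) : ℝ) ≤ φ (2 * (c:ℝ) * n) := by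
      apply hmono (by rw [hcn1R]; simp [Set.mem_Ici]; nlinarith)
        (by simp [Set.mem_Ici]; nlinarith) h1
    have h3 : φ (2 * (c:ℝ) * n) ≤ K * φ n := hK n (le_trans hkN₀ hnN₀)
    have h4 : (0:ℝ) ≤ ((c*(n+1) : ℕ) : ℝ) := by positivity
    have h5 : (0:ℝ) ≤ φ ((c*(n+1) : ℕ) : ℝ) := by linarith
    rw [hLdef]
    nlinarith
  have hm_y : (m:ℝ) ≤ ((c*(n+1) : ℕ) : ℝ) * φ (c*(n+1) : ℕ) := le_trans hm_bn1.le hbn1_y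
  have hm_Lx : (m:ℝ) ≤ L * ((n:ℝ) * φ n) := le_trans hm_y hy_Lx
  have hy_Lm : ((c*(n+1) : ℕ) : ℝ) * φ (c*(n+1) : ℕ) ≤ L * (m:ℝ) := by
    calc ((c*(n+1) : ℕ) : ℝ) * φ (c*(n+1) : ℕ) ≤ L * ((n:ℝ) * φ n) := hy_Lx
      _ ≤ L * m := by nlinarith
  have hm0 : (0:ℝ) < (m:ℝ) := by linarith
  -- comparison applications
  have hcu := hcomp (m:ℝ) ((n:ℝ) * φ n) hmT
    (by rw [div_le_iff₀ hL0]; nlinarith) (by nlinarith)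
  have hcl := hcomp (((c*(n+1) : ℕ) : ℝ) * φ (c*(n+1) : ℕ)) (m:ℝ)
    (le_trans hmT hm_y) (by rw [div_le_iff₀ hL0]; nlinarith) (by nlinarith)
  -- bounds from hbound
  have hup := (hN n (le_trans hNN₀ hnN₀)).2
  have hlo := (hN (n+1) (by omega)).1
  have hma : a m ≤ a (b n) := ha hbn
  have hmb2 : a (b (n+1)) ≤ a m := ha hm1.le
  constructor
  · -- lower bound
    have h1 : a (b (n+1)) = a (c * (n+1) * ⌈φ (c * (n+1) : ℕ) / 2⌉₊) := by rw [hbdef]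
    have h2 : C₁ * Real.logb 2 (((c*(n+1) : ℕ) : ℝ) * φ (c*(n+1) : ℕ)) ^ β *
        ((((c*(n+1) : ℕ)) : ℝ) * φ (c*(n+1) : ℕ)) ^ (-α) ≤ a m := by
      rw [h1] at hmb2
      exact le_trans hlo hmb2
    have h3 : C₁ / D * Real.logb 2 m ^ β * (m:ℝ) ^ (-α) =
        (C₁ / D) * (Real.logb 2 m ^ β * (m:ℝ) ^ (-α)) := by ring
    rw [h3]
    calc (C₁ / D) * (Real.logb 2 m ^ β * (m:ℝ) ^ (-α))
        ≤ (C₁ / D) * (D * (Real.logb 2 (((c*(n+1) : ℕ) : ℝ) * φ (c*(n+1) : ℕ)) ^ β *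
            ((((c*(n+1) : ℕ)) : ℝ) * φ (c*(n+1) : ℕ)) ^ (-α))) :=
          mul_le_mul_of_nonneg_left hcl (by positivity)
      _ = C₁ * Real.logb 2 (((c*(n+1) : ℕ) : ℝ) * φ (c*(n+1) : ℕ)) ^ β *
            ((((c*(n+1) : ℕ)) : ℝ) * φ (c*(n+1) : ℕ)) ^ (-α) := by
          field_simp
      _ ≤ a m := h2
  · -- upper bound
    have h1 : a (b n) = a (c * n * ⌈φ (c * n : ℕ) / 2⌉₊) := by rw [hbdef]
    have h2 : a m ≤ C₂ * Real.logb 2 ((n:ℝ) * φ n) ^ β * ((n:ℝ) * φ n) ^ (-α) := by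
      rw [h1] at hma
      exact le_trans hma hup
    calc a m ≤ C₂ * Real.logb 2 ((n:ℝ) * φ n) ^ β * ((n:ℝ) * φ n) ^ (-α) := h2
      _ = C₂ * (Real.logb 2 ((n:ℝ) * φ n) ^ β * ((n:ℝ) * φ n) ^ (-α)) := by ring
      _ ≤ C₂ * (D * (Real.logb 2 m ^ β * (m:ℝ) ^ (-α))) :=
          mul_le_mul_of_nonneg_left hcu hC₂.le
      _ = C₂ * D * Real.logb 2 m ^ β * (m:ℝ) ^ (-α) := by ring
end
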